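/- arXiv:1801.07206 — 3 statements merged into one kernel-verified Lean document; each statement's English description precedes it below -/
import Mathlib

section
/- For any real $c>0$ and $\alpha>0$, suppose $y:[0,\infty)\to[0,\infty)$ is differentiable, satisfies the differential inequality $y'(t) + 2\alpha y(t) - c\, y(t)^{3/2} \le 0$ for all $t\ge 0$, and the initial condition $0 < \sqrt{y(0)} < \alpha/c$. Then for all $t\ge 0$, $y(t) \le \left[\left(\frac{1}{\sqrt{y(0)}} - \frac{c}{2\alpha}\right)e^{\alpha t} + \frac{c}{2\alpha}\right]^{-2} < 4\,y(0)\, e^{-2\alpha t}$. -/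
/-! With `u t = A e^{αt} + k`, the function `u⁻²` solves `B' = 2αk B^{3/2} - 2αB` exactly. If
`2αk > c` it is therefore a strict supersolution of the inequality satisfied by `y`, so it fences
`y` from above once it does so at `t = 0`; choosing `A + k = 1/√(y 0)` and letting `2αk ↓ c` gives
the first bound. The second follows from `A = 1/√(y 0) - c/(2α) > 1/(2√(y 0))`, which is
`√(y 0) < α/c`. -/

open Real Set Filter Topology

theorem hasDerivAt_one_div_sq_mul_exp_add (A k α t : ℝ) (hu : A * exp (α * t) + k ≠ 0) :
    HasDerivAt (fun t => 1 / (A * exp (α * t) + k) ^ 2)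
      (2 * α * k / (A * exp (α * t) + k) ^ 3 - 2 * α / (A * exp (α * t) + k) ^ 2) t := by
  have hexp : HasDerivAt (fun t => A * exp (α * t) + k) (A * (exp (α * t) * α)) t :=
    (((hasDerivAt_id t).const_mul α).exp.const_mul A).add_const k |>.congr_deriv (by simp)
  have hinv := (hexp.fun_pow 2).fun_inv (pow_ne_zero 2 hu)
  simp only [one_div]
  refine hinv.congr_deriv ?_
  push_cast
  field_simp
  ring

theorem bernoulli_rhs_lt {c α k u : ℝ} (hu : 0 < u) (hck : c < 2 * α * k) :
    c * (1 / u ^ 2 * sqrt (1 / u ^ 2)) - 2 * α * (1 / u ^ 2)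
      < 2 * α * k / u ^ 3 - 2 * α / u ^ 2 := by
  rw [sqrt_div' _ (sq_nonneg u), sqrt_one, sqrt_sq hu.le]
  have : c / u ^ 3 < 2 * α * k / u ^ 3 := div_lt_div_of_pos_right hck (by positivity)
  field_simp at this ⊢
  linarith

theorem le_one_div_sq_mul_exp_add_of_bernoulli {c α : ℝ} {y : ℝ → ℝ}
    (hy : ∀ t, 0 ≤ t → DifferentiableAt ℝ y t)
    (hineq : ∀ t, 0 ≤ t → deriv y t + 2 * α * y t - c * (y t * sqrt (y t)) ≤ 0)
    {A k : ℝ} (hA : 0 ≤ A) (hk : 0 < k) (hck : c < 2 * α * k) (h0 : y 0 ≤ 1 / (A + k) ^ 2)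
    {t : ℝ} (ht : 0 ≤ t) :
    y t ≤ 1 / (A * exp (α * t) + k) ^ 2 := by
  have hu : ∀ x, 0 < A * exp (α * x) + k := fun x => by positivity
  refine image_le_of_deriv_right_lt_deriv_boundary (a := 0) (b := t)
    (fun x hx => (hy x hx.1).continuousAt.continuousWithinAt)
    (fun x hx => (hy x hx.1).hasDerivAt.hasDerivWithinAt) (by simpa using h0)
    (fun x => hasDerivAt_one_div_sq_mul_exp_add A k α x (hu x).ne') ?_ ⟨ht, le_rfl⟩
  intro x hx hyx
  have := bernoulli_rhs_lt (hu x) hck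
  rw [← hyx] at this
  linarith [hineq x hx.1]

theorem one_div_sq_mul_exp_add_lt {s A k α : ℝ} (hs : 0 < s) (hA : 1 / (2 * s) < A) (hk : 0 ≤ k)
    (t : ℝ) : 1 / (A * exp (α * t) + k) ^ 2 < 4 * s ^ 2 * exp (-2 * α * t) := by
  have hlt : exp (α * t) / (2 * s) < A * exp (α * t) + k := by
    have := mul_lt_mul_of_pos_right hA (exp_pos (α * t))
    rw [one_div_mul_eq_div] at this
    linarith
  calc 1 / (A * exp (α * t) + k) ^ 2
      < 1 / (exp (α * t) / (2 * s)) ^ 2 := by gcongr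
    _ = 4 * s ^ 2 * exp (-2 * α * t) := by
      rw [show -2 * α * t = -(α * t + α * t) by ring, exp_neg, exp_add]
      field_simp
      ring

theorem le_bernoulli_exact_solution {c α s : ℝ} {y : ℝ → ℝ} (hc : 0 < c) (hα : 0 < α)
    (hy : ∀ t, 0 ≤ t → DifferentiableAt ℝ y t)
    (hineq : ∀ t, 0 ≤ t → deriv y t + 2 * α * y t - c * (y t * sqrt (y t)) ≤ 0)
    (hs : 0 < s) (hy0 : y 0 = s ^ 2) (hcs : c * s < α) {t : ℝ} (ht : 0 ≤ t) :
    y t ≤ 1 / ((1 / s - c / (2 * α)) * exp (α * t) + c / (2 * α)) ^ 2 := by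
  set g : ℝ → ℝ := fun d => 1 / ((1 / s - d / (2 * α)) * exp (α * t) + d / (2 * α)) ^ 2
  have hA : 0 < 1 / s - c / (2 * α) := by
    rw [sub_pos, div_lt_div_iff₀ (by positivity) hs]
    linarith
  have hg : Tendsto g (𝓝[>] c) (𝓝 (g c)) := by
    refine ContinuousAt.tendsto ?_ |>.mono_left nhdsWithin_le_nhds
    exact continuousAt_const.div (by fun_prop)
      (pow_pos (add_pos (mul_pos hA (exp_pos _)) (by positivity)) 2).ne'
  refine ge_of_tendsto hg ?_
  have hcd : c < 2 * α / s := by rw [lt_div_iff₀ hs]; linarith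
  filter_upwards [Ioo_mem_nhdsGT hcd] with d ⟨hcd, hds⟩
  refine le_one_div_sq_mul_exp_add_of_bernoulli hy hineq ?_
    (div_pos (hc.trans hcd) (by positivity)) ?_ ?_ ht
  · rw [sub_nonneg, div_le_div_iff₀ (by positivity) hs]
    rw [lt_div_iff₀ hs] at hds
    linarith
  · field_simp
    exact hcd
  · rw [sub_add_cancel, hy0, one_div_pow, one_div_one_div]

theorem stmt_5_general (c α : ℝ) (hc : 0 < c) (hα : 0 < α) (y : ℝ → ℝ)
    (hy : ∀ t, 0 ≤ t → DifferentiableAt ℝ y t)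
    (hineq : ∀ t, 0 ≤ t → deriv y t + 2 * α * y t - c * (y t * Real.sqrt (y t)) ≤ 0)
    (h0 : 0 < Real.sqrt (y 0)) (h0' : Real.sqrt (y 0) < α / c) :
    ∀ t, 0 ≤ t →
      y t ≤ 1 / ((1 / Real.sqrt (y 0) - c / (2 * α)) * Real.exp (α * t) + c / (2 * α)) ^ 2 ∧
      1 / ((1 / Real.sqrt (y 0) - c / (2 * α)) * Real.exp (α * t) + c / (2 * α)) ^ 2
        < 4 * y 0 * Real.exp (-2 * α * t) := by
  intro t ht
  have hy0 : y 0 = sqrt (y 0) ^ 2 := (sq_sqrt (sqrt_pos.mp h0).le).symm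
  have hcs : c * sqrt (y 0) < α := by rwa [lt_div_iff₀ hc, mul_comm] at h0'
  have hA : 1 / (2 * sqrt (y 0)) < 1 / sqrt (y 0) - c / (2 * α) := by
    rw [lt_sub_iff_add_lt]
    field_simp
    linarith
  refine ⟨le_bernoulli_exact_solution hc hα hy hineq h0 hy0 hcs ht, ?_⟩
  nth_rewrite 2 [hy0]
  exact one_div_sq_mul_exp_add_lt h0 hA (div_pos hc (by positivity)).le t

/-- Bernoulli-type differential inequality: if `y ≥ 0` is differentiable,
`y' + 2αy - c y^{3/2} ≤ 0` on `[0,∞)` and `0 < √(y 0) < α/c`, then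
`y t ≤ [(1/√(y 0) - c/(2α)) e^{αt} + c/(2α)]⁻²  < 4 y(0) e^{-2αt}`. -/
theorem stmt_5 (c α : ℝ) (hc : 0 < c) (hα : 0 < α) (y : ℝ → ℝ)
    (hy : ∀ t, 0 ≤ t → DifferentiableAt ℝ y t)
    (hpos : ∀ t, 0 ≤ t → 0 ≤ y t)
    (hineq : ∀ t, 0 ≤ t → deriv y t + 2 * α * y t - c * (y t * Real.sqrt (y t)) ≤ 0)
    (h0 : 0 < Real.sqrt (y 0)) (h0' : Real.sqrt (y 0) < α / c) :
    ∀ t, 0 ≤ t →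
      y t ≤ 1 / ((1 / Real.sqrt (y 0) - c / (2 * α)) * Real.exp (α * t) + c / (2 * α)) ^ 2 ∧
      1 / ((1 / Real.sqrt (y 0) - c / (2 * α)) * Real.exp (α * t) + c / (2 * α)) ^ 2
        < 4 * y 0 * Real.exp (-2 * α * t) :=
  stmt_5_general c α hc hα y hy hineq h0 h0'
end

section
/- Let $A$ be a closed densely defined operator on a Hilbert space $H$ with bounded, symmetric, nonnegative operator $X$ satisfying $A^*X + XA + Y = 0$ in the sense that $2\,\mathrm{Re}(XAu,u)_H = -(Yu,u)_H$ for all $u\in D(A)$, where $Y$ is bounded, symmetric, and positive definite: $(Yu,u)_H \ge c\|u\|_H^2$ with $c>0$. Suppose additionally $\mathrm{Re}(Au,u)_H \le 0$ for $u\in D(A)$, and $(I+X)$ satisfies $\|u\|^2 \le ((I+X)u,u) \le C_X\|u\|^2$. If $u(t)$ is a classical solution of $u'(t)=Au(t)$, then $\|u(t)\|_H \le \sqrt{C_X}\, \|u(0)\|_H\, e^{-\gamma t}$ for $\gamma = \frac{c}{2 C_X} > 0$. -/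
/-!
The energy `E(t) = ⟪(I + X) u(t), u(t)⟫` is a Lyapunov function: by symmetry of `X`,
`E' = 2⟪Au, u⟫ + 2⟪XAu, u⟫ = 2⟪Au, u⟫ - ⟪Yu, u⟫ ≤ -c‖u‖² ≤ -(c / C_X) E`, so Grönwall gives
`‖u(t)‖² ≤ E(t) ≤ E(0) e^{-ct/C_X} ≤ C_X ‖u(0)‖² e^{-ct/C_X}`; take square roots.
-/

open Real Set RealInnerProductSpace

theorem le_mul_exp_of_hasDerivAt_le_mul {f f' : ℝ → ℝ} {K a b : ℝ}
    (hf : ∀ x ∈ Icc a b, HasDerivAt f (f' x) x) (bound : ∀ x ∈ Ico a b, f' x ≤ K * f x) :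
    ∀ x ∈ Icc a b, f x ≤ f a * exp (K * (x - a)) := by
  intro x hx
  rw [← gronwallBound_ε0]
  refine le_gronwallBound_of_liminf_deriv_right_le
    (fun y hy => (hf y hy).continuousAt.continuousWithinAt)
    (fun y hy _ hr => (hf y (Ico_subset_Icc_self hy)).hasDerivWithinAt.liminf_right_slope_le hr)
    le_rfl (fun y hy => by simpa using bound y hy) x hx

theorem hasDerivAt_inner_apply_self {H : Type*} [NormedAddCommGroup H] [InnerProductSpace ℝ H]
    {T : H →L[ℝ] H} (hT : (T : H →ₗ[ℝ] H).IsSymmetric)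
    {v : ℝ → H} {v' : H} {t : ℝ} (hv : HasDerivAt v v' t) :
    HasDerivAt (fun τ => ⟪T (v τ), v τ⟫) (2 * ⟪T v', v t⟫) t := by
  have h : HasDerivAt (fun τ => ⟪T (v τ), v τ⟫) (⟪T (v t), v'⟫ + ⟪T v', v t⟫) t :=
    (T.hasFDerivAt.comp_hasDerivAt t hv).inner ℝ hv
  rwa [show ⟪T (v t), v'⟫ = ⟪T v', v t⟫ from (hT _ _).trans (real_inner_comm _ _),
    ← two_mul] at h

theorem le_sqrt_mul_mul_exp_of_sq_le {a b C s : ℝ} (hb : 0 ≤ b) (hC : 0 ≤ C)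
    (h : a ^ 2 ≤ C * b ^ 2 * exp (2 * s)) : a ≤ √C * b * exp s := by
  calc a ≤ √(C * b ^ 2 * exp (2 * s)) := (le_abs_self _).trans (abs_le_sqrt h)
    _ = √C * b * exp s := by
      rw [sqrt_mul' _ (exp_pos _).le, sqrt_mul hC, sqrt_sq hb, ← exp_half]
      ring_nf

theorem stmt_18_general {H : Type*} [NormedAddCommGroup H] [InnerProductSpace ℝ H]
    (D : Submodule ℝ H)
    (A : D →ₗ[ℝ] H) (X Y : H →L[ℝ] H) (c CX : ℝ) (hc : 0 < c) (hCX : 0 < CX)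
    (hXsym : ∀ u v : H, (inner ℝ (X u) v : ℝ) = inner ℝ u (X v))
    (hYpos : ∀ u : H, c * ‖u‖ ^ 2 ≤ (inner ℝ (Y u) u : ℝ))
    (hLyap : ∀ u : D, 2 * (inner ℝ (X (A u)) (u : H) : ℝ) = -(inner ℝ (Y (u : H)) (u : H) : ℝ))
    (hdiss : ∀ u : D, (inner ℝ (A u) (u : H) : ℝ) ≤ 0)
    (hIX : ∀ u : H, ‖u‖ ^ 2 ≤ (inner ℝ (u + X u) u : ℝ) ∧ (inner ℝ (u + X u) u : ℝ) ≤ CX * ‖u‖ ^ 2)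
    (u : ℝ → D)
    (hu : ∀ t : ℝ, 0 ≤ t → HasDerivAt (fun τ => (u τ : H)) (A (u t)) t) :
    ∀ t : ℝ, 0 ≤ t →
      ‖(u t : H)‖ ≤ Real.sqrt CX * ‖(u 0 : H)‖ * Real.exp (-(c / (2 * CX)) * t) := by
  intro t ht
  set E : ℝ → ℝ := fun τ => ⟪(1 + X) (u τ : H), u τ⟫
  have hsymm : ((1 + X : H →L[ℝ] H) : H →ₗ[ℝ] H).IsSymmetric :=
    LinearMap.IsSymmetric.id.add hXsym
  have hE : ∀ τ ∈ Icc 0 t, HasDerivAt E (2 * ⟪(1 + X) (A (u τ)), u τ⟫) τ :=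
    fun τ hτ => hasDerivAt_inner_apply_self hsymm (hu τ hτ.1)
  have hdecay : ∀ τ ∈ Ico 0 t,
      2 * ⟪(1 + X) (A (u τ)), u τ⟫ ≤ -(c / CX) * E τ := by
    intro τ _
    have hE_le : c / CX * E τ ≤ c * ‖(u τ : H)‖ ^ 2 := by
      calc c / CX * E τ ≤ c / CX * (CX * ‖(u τ : H)‖ ^ 2) := by gcongr; exact (hIX _).2
        _ = c * ‖(u τ : H)‖ ^ 2 := by field_simp
    simp only [add_apply, one_apply_eq_self, inner_add_left]
    linarith [hLyap (u τ), hdiss (u τ), hYpos (u τ : H)]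
  refine le_sqrt_mul_mul_exp_of_sq_le (norm_nonneg _) hCX.le ?_
  calc ‖(u t : H)‖ ^ 2 ≤ E t := (hIX _).1
    _ ≤ E 0 * exp (-(c / CX) * (t - 0)) :=
      le_mul_exp_of_hasDerivAt_le_mul hE hdecay t (right_mem_Icc.2 ht)
    _ ≤ CX * ‖(u 0 : H)‖ ^ 2 * exp (-(c / CX) * (t - 0)) := by gcongr; exact (hIX _).2
    _ = CX * ‖(u 0 : H)‖ ^ 2 * exp (2 * (-(c / (2 * CX)) * t)) := by
      congr 2; field_simp; ring

/-- Abstract Lyapunov decay: if `X` is bounded symmetric nonnegative with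
`2⟨XAu,u⟩ = -⟨Yu,u⟩` on `D(A)`, `Y` symmetric with `⟨Yu,u⟩ ≥ c‖u‖²`, `A` is
dissipative, and `‖u‖² ≤ ⟨(I+X)u,u⟩ ≤ C_X‖u‖²`, then any classical solution of
`u' = Au` satisfies `‖u(t)‖ ≤ √C_X ‖u(0)‖ e^{-γt}` with `γ = c/(2C_X)`. -/
theorem stmt_18 {H : Type*} [NormedAddCommGroup H] [InnerProductSpace ℝ H] [CompleteSpace H]
    (D : Submodule ℝ H) (hD : Dense (D : Set H))
    (A : D →ₗ[ℝ] H) (X Y : H →L[ℝ] H) (c CX : ℝ) (hc : 0 < c) (hCX : 0 < CX)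
    (hXsym : ∀ u v : H, (inner ℝ (X u) v : ℝ) = inner ℝ u (X v))
    (hXpos : ∀ u : H, (0:ℝ) ≤ inner ℝ (X u) u)
    (hYsym : ∀ u v : H, (inner ℝ (Y u) v : ℝ) = inner ℝ u (Y v))
    (hYpos : ∀ u : H, c * ‖u‖ ^ 2 ≤ (inner ℝ (Y u) u : ℝ))
    (hLyap : ∀ u : D, 2 * (inner ℝ (X (A u)) (u : H) : ℝ) = -(inner ℝ (Y (u : H)) (u : H) : ℝ))
    (hdiss : ∀ u : D, (inner ℝ (A u) (u : H) : ℝ) ≤ 0)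
    (hIX : ∀ u : H, ‖u‖ ^ 2 ≤ (inner ℝ (u + X u) u : ℝ) ∧ (inner ℝ (u + X u) u : ℝ) ≤ CX * ‖u‖ ^ 2)
    (u : ℝ → D)
    (hu : ∀ t : ℝ, 0 ≤ t → HasDerivAt (fun τ => (u τ : H)) (A (u t)) t) :
    ∀ t : ℝ, 0 ≤ t →
      ‖(u t : H)‖ ≤ Real.sqrt CX * ‖(u 0 : H)‖ * Real.exp (-(c / (2 * CX)) * t) :=
  stmt_18_general D A X Y c CX hc hCX hXsym hYpos hLyap hdiss hIX u hu
end

section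
/- The operator $A u = -u'''$ with domain $D(A) = \{u \in H^3(0,L) : u(0)=0,\ u'(L)=0,\ u(L)=u''(L)\}$ on $L^2(0,L)$ has no purely imaginary eigenvalues: if $A u = i\xi u$ for some $\xi\in\mathbb R$ and $u\in D(A)$, then $u = 0$. Consequently every eigenvalue $\lambda$ of $A$ satisfies $\mathrm{Re}\,\lambda < 0$, given that $\mathrm{Re}(Au,u)_{L^2} = -|u(L)|^2 - \frac12|u'(0)|^2 \le 0$ for all $u\in D(A)$. -/
open intervalIntegral Set
open scoped ComplexConjugate RealInnerProductSpace

/-!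
If `u''' = T u` with `⟪T v, v⟫ = 0` (here `T = -iξ`), the energy `⟪u'', u⟫ - ‖u'‖² / 2` is
conserved, its derivative being `⟪u''', u⟫`. The boundary conditions make it `‖u L‖²` at `L`
and `-‖u' 0‖² / 2` at `0`, so `u L = 0`. Then `u`, `u'` and `u''` all vanish at `L`, and
uniqueness for the linear ODE forces `u = 0`. For an eigenvalue with `Re λ ≥ 0`, the dissipation
identity reads `Re λ ∫ |u|² = -|u L|² - |u' 0|² / 2`, which again gives `u L = 0`.
-/

section LinearODE

variable {E : Type*} [NormedAddCommGroup E] [NormedSpace ℝ E] {u : ℝ → E}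

theorem ContDiff.hasDerivAt_iteratedDeriv {n k : ℕ} (hu : ContDiff ℝ n u) (hk : k < n)
    (x : ℝ) : HasDerivAt (iteratedDeriv k u) (iteratedDeriv (k + 1) u x) x := by
  rw [iteratedDeriv_succ]
  exact (hu.differentiable_iteratedDeriv k (mod_cast hk) x).hasDerivAt

def thirdOrderCompanion (T : E →L[ℝ] E) : E × E × E →L[ℝ] E × E × E :=
  (ContinuousLinearMap.fst ℝ E E ∘L ContinuousLinearMap.snd ℝ E (E × E)).prod
    ((ContinuousLinearMap.snd ℝ E E ∘L ContinuousLinearMap.snd ℝ E (E × E)).prod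
      (T ∘L ContinuousLinearMap.fst ℝ E (E × E)))

@[simp]
theorem thirdOrderCompanion_apply (T : E →L[ℝ] E) (p : E × E × E) :
    thirdOrderCompanion T p = (p.2.1, p.2.2, T p.1) :=
  rfl

theorem eqOn_zero_of_iteratedDeriv_three_eq {a b : ℝ} (T : E →L[ℝ] E) (hu : ContDiff ℝ 3 u)
    (hode : ∀ x ∈ Icc a b, iteratedDeriv 3 u x = T (u x))
    (h0 : u b = 0) (h1 : deriv u b = 0) (h2 : iteratedDeriv 2 u b = 0) :
    EqOn u 0 (Icc a b) := by
  set jet : ℝ → E × E × E := fun t => (u t, deriv u t, iteratedDeriv 2 u t)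
  have hjet : ∀ t, HasDerivAt jet (deriv u t, iteratedDeriv 2 u t, iteratedDeriv 3 u t) t := by
    intro t
    have hu0 := hu.hasDerivAt_iteratedDeriv (k := 0) (by norm_num) t
    have hu1 := hu.hasDerivAt_iteratedDeriv (k := 1) (by norm_num) t
    have hu2 := hu.hasDerivAt_iteratedDeriv (k := 2) (by norm_num) t
    simp only [iteratedDeriv_zero, iteratedDeriv_one, zero_add] at hu0 hu1
    exact hu0.prodMk (hu1.prodMk hu2)
  have hjet_cont : Continuous jet := continuous_iff_continuousAt.2 fun t => (hjet t).continuousAt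
  have hjet_deriv : ∀ t ∈ Ioc a b,
      HasDerivWithinAt jet (thirdOrderCompanion T (jet t)) (Iic t) t := by
    intro t ht
    rw [thirdOrderCompanion_apply, ← hode t (Ioc_subset_Icc_self ht)]
    exact (hjet t).hasDerivWithinAt
  have hzero_deriv : ∀ t ∈ Ioc a b, HasDerivWithinAt (fun _ => (0 : E × E × E))
      (thirdOrderCompanion T 0) (Iic t) t := fun t _ => by
    rw [map_zero]
    exact hasDerivWithinAt_const t (Iic t) 0
  have hjet_eq := ODE_solution_unique_of_mem_Icc_left (K := ‖thirdOrderCompanion T‖₊)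
    (s := fun _ => univ) (fun _ _ => (thirdOrderCompanion T).lipschitz.lipschitzOnWith)
    hjet_cont.continuousOn hjet_deriv (fun _ _ => trivial) continuousOn_const hzero_deriv
    (fun _ _ => trivial) (by simp [jet, h0, h1, h2])
  intro x hx
  simpa [jet] using congrArg Prod.fst (hjet_eq hx)

end LinearODE

section Energy

variable {E : Type*} [NormedAddCommGroup E] [InnerProductSpace ℝ E] {u : ℝ → E}

theorem inner_iteratedDeriv_two_sub_norm_deriv_sq_eq {a b : ℝ} (hab : a ≤ b)
    (hu : ContDiff ℝ 3 u)
    (hskew : ∀ x ∈ Icc a b, ⟪iteratedDeriv 3 u x, u x⟫ = 0) :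
    ⟪iteratedDeriv 2 u b, u b⟫ - ‖deriv u b‖ ^ 2 / 2 =
      ⟪iteratedDeriv 2 u a, u a⟫ - ‖deriv u a‖ ^ 2 / 2 := by
  set energy : ℝ → ℝ := fun t => ⟪iteratedDeriv 2 u t, u t⟫ - ‖deriv u t‖ ^ 2 / 2
  have hderiv : ∀ t, HasDerivAt energy ⟪iteratedDeriv 3 u t, u t⟫ t := by
    intro t
    have hu0 := hu.hasDerivAt_iteratedDeriv (k := 0) (by norm_num) t
    have hu1 := hu.hasDerivAt_iteratedDeriv (k := 1) (by norm_num) t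
    have hu2 := hu.hasDerivAt_iteratedDeriv (k := 2) (by norm_num) t
    simp only [iteratedDeriv_zero, iteratedDeriv_one, zero_add] at hu0 hu1
    refine ((hu2.inner ℝ hu0).sub (hu1.norm_sq.div_const 2)).congr_deriv ?_
    rw [real_inner_comm (deriv u t)]
    ring
  have hcont : Continuous energy := continuous_iff_continuousAt.2 fun t => (hderiv t).continuousAt
  refine constant_of_has_deriv_right_zero hcont.continuousOn (fun t ht => ?_) b ⟨hab, le_rfl⟩
  rw [← hskew t (Ico_subset_Icc_self ht)]
  exact (hderiv t).hasDerivWithinAt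

theorem apply_eq_zero_of_inner_iteratedDeriv_three_eq_zero {L : ℝ} (hL : 0 ≤ L)
    (hu : ContDiff ℝ 3 u) (h0 : u 0 = 0) (h1 : deriv u L = 0) (h2 : u L = iteratedDeriv 2 u L)
    (hskew : ∀ x ∈ Icc 0 L, ⟪iteratedDeriv 3 u x, u x⟫ = 0) : u L = 0 := by
  have henergy := inner_iteratedDeriv_two_sub_norm_deriv_sq_eq hL hu hskew
  rw [h0, h1, ← h2, inner_zero_right, norm_zero, real_inner_self_eq_norm_sq] at henergy
  have : ‖u L‖ ^ 2 = 0 := by nlinarith [sq_nonneg ‖deriv u 0‖, sq_nonneg ‖u L‖]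
  simpa using this

end Energy

namespace Complex

theorem real_inner_mul_left_self (c z : ℂ) : ⟪c * z, z⟫ = c.re * ‖z‖ ^ 2 := by
  rw [Complex.inner, map_mul, mul_left_comm, mul_conj', ← ofReal_pow, re_mul_ofReal, conj_re]

theorem re_intervalIntegral_mul_conj_eq {a b : ℝ} (hab : a ≤ b) {f g : ℝ → ℂ} {c : ℂ}
    (hfg : ∀ x ∈ Icc a b, f x = c * g x) :
    (∫ x in a..b, f x * conj (g x)).re = c.re * ∫ x in a..b, ‖g x‖ ^ 2 := by
  have hcongr : ∫ x in a..b, f x * conj (g x) = ∫ x in a..b, c * ((‖g x‖ ^ 2 : ℝ) : ℂ) := by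
    refine integral_congr fun x hx => ?_
    rw [uIcc_of_le hab] at hx
    simp only [hfg x hx, mul_assoc, mul_conj', ofReal_pow]
  rw [hcongr, integral_const_mul, integral_ofReal, re_mul_ofReal]

theorem eqOn_zero_of_neg_iteratedDeriv_three_eq_mul {L : ℝ} {u : ℝ → ℂ} {c : ℂ}
    (hu : ContDiff ℝ 3 u) (hode : ∀ x ∈ Icc 0 L, -iteratedDeriv 3 u x = c * u x)
    (h1 : deriv u L = 0) (h2 : u L = iteratedDeriv 2 u L) (huL : u L = 0) :
    EqOn u 0 (Icc 0 L) := by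
  refine eqOn_zero_of_iteratedDeriv_three_eq (ContinuousLinearMap.mul ℝ ℂ (-c)) hu
    (fun x hx => ?_) huL h1 (h2.symm.trans huL)
  rw [ContinuousLinearMap.mul_apply', neg_mul, ← hode x hx, neg_neg]

end Complex

/-- The operator `Au = -u'''` with domain conditions `u(0)=0`, `u'(L)=0`,
`u(L)=u''(L)` has no purely imaginary eigenvalues; consequently, given the
identity `Re(Au,u) = -|u(L)|² - ½|u'(0)|²` on the domain, every eigenvalue has
negative real part. -/
theorem stmt_19 (L : ℝ) (hL : 0 < L) :
    (∀ (u : ℝ → ℂ) (ξ : ℝ), ContDiff ℝ 3 u → u 0 = 0 → deriv u L = 0 →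
      u L = iteratedDeriv 2 u L →
      (∀ x ∈ Set.Icc (0:ℝ) L, -(iteratedDeriv 3 u x) = (Complex.I * ξ) * u x) →
      ∀ x ∈ Set.Icc (0:ℝ) L, u x = 0) ∧
    (∀ (u : ℝ → ℂ) (lam : ℂ), ContDiff ℝ 3 u → u 0 = 0 → deriv u L = 0 →
      u L = iteratedDeriv 2 u L →
      (∀ x ∈ Set.Icc (0:ℝ) L, -(iteratedDeriv 3 u x) = lam * u x) →
      (∃ x ∈ Set.Icc (0:ℝ) L, u x ≠ 0) →
      (∀ v : ℝ → ℂ, ContDiff ℝ 3 v → v 0 = 0 → deriv v L = 0 →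
        v L = iteratedDeriv 2 v L →
        (∫ x in (0:ℝ)..L, -(iteratedDeriv 3 v x) * (starRingEnd ℂ) (v x)).re
          = -(‖v L‖) ^ 2 - (1/2) * (‖deriv v 0‖) ^ 2) →
      lam.re < 0) := by
  refine ⟨fun u ξ hu h0 h1 h2 hode => ?_, fun u lam hu h0 h1 h2 hode ⟨x, hx, hux⟩ hdiss => ?_⟩
  · have hskew : ∀ x ∈ Icc 0 L, ⟪iteratedDeriv 3 u x, u x⟫ = 0 := fun x hx => by
      rw [← neg_neg (iteratedDeriv 3 u x), hode x hx, inner_neg_left,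
        Complex.real_inner_mul_left_self]
      simp
    have huL := apply_eq_zero_of_inner_iteratedDeriv_three_eq_zero hL.le hu h0 h1 h2 hskew
    exact Complex.eqOn_zero_of_neg_iteratedDeriv_three_eq_mul hu hode h1 h2 huL
  · by_contra! hre
    have hRe := hdiss u hu h0 h1 h2
    rw [Complex.re_intervalIntegral_mul_conj_eq hL.le hode] at hRe
    have hnonneg : 0 ≤ lam.re * ∫ x in 0..L, ‖u x‖ ^ 2 :=
      mul_nonneg hre (integral_nonneg hL.le fun _ _ => sq_nonneg _)
    have huL : ‖u L‖ ^ 2 = 0 := by nlinarith [sq_nonneg ‖u L‖, sq_nonneg ‖deriv u 0‖]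
    exact hux (Complex.eqOn_zero_of_neg_iteratedDeriv_three_eq_mul hu hode h1 h2
      (by simpa using huL) hx)
end
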